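/- Let x^{A_1},...,x^{A_c} be pairwise coprime monomials in k[x_1,...,x_n] and I the ideal they generate. If x^B is a minimal monomial generator of the integral closure Ī, then there exist rationals λ_1,...,λ_c ∈ [0,1] with Σ λ_i = 1 such that Σ λ_i A_i ≼ B componentwise, and consequently deg(x^B) ≥ min_i deg(x^{A_i}) and deg(x^B) ≤ Σ_i deg(x^{A_i}). -/

import Mathlib

open MvPolynomial

variable {k : Type} [Field k] {n : ℕ}

/-- An ideal of `k[x₁,…,xₙ]` is a *monomial ideal* if it is generated by monomials. -/
def IsMonomialIdeal (I : Ideal (MvPolynomial (Fin n) k)) : Prop :=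
  ∃ G : Set (Fin n →₀ ℕ), I = Ideal.span ((fun A => (monomial A (1 : k))) '' G)

/-- The integral closure of an ideal `I`, as a set: all elements `f` satisfying an
equation `f^r + a₁ f^{r-1} + ⋯ + a_r = 0` with `aᵢ ∈ Iⁱ`. -/
def intCl (I : Ideal (MvPolynomial (Fin n) k)) : Set (MvPolynomial (Fin n) k) :=
  {f | ∃ r : ℕ, 0 < r ∧ ∃ a : ℕ → MvPolynomial (Fin n) k,
    (∀ i, 1 ≤ i → i ≤ r → a i ∈ I ^ i) ∧
    f ^ r + ∑ i ∈ Finset.Icc 1 r, a i * f ^ (r - i) = 0}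

/-- The exponent vectors of the minimal monomial generators of a set `T` of polynomials:
those `A` with `x^A ∈ T` minimal in the componentwise (divisibility) order. -/
def minExps (T : Set (MvPolynomial (Fin n) k)) : Set (Fin n →₀ ℕ) :=
  {A | monomial A (1 : k) ∈ T ∧
    ∀ B : Fin n →₀ ℕ, monomial B (1 : k) ∈ T → B ≤ A → B = A}

/-!
A monomial `x^B` is integral over `I = (x^{A_1}, …, x^{A_c})` iff for some `i ≥ 1` a product of
`i` generators, taken with multiplicities `m` (so `∑ m_t = i`), divides `x^{iB}`: the coefficient of
`x^{rB}` in an integral equation of degree `r` can only come from a term `a_i x^{(r-i)B}` with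
`x^{iB}` in the support of `a_i ∈ I^i`, and conversely `(x^B)^i ∈ I^i` is itself an integral
equation. Dividing `∑ m_t A_t ≤ iB` by `i` gives the convex combination, and comparing degrees gives
the lower bound. Such a product also divides `x^{i ∑ A_t}`, so `x^{B ⊓ ∑ A_t}` is integral as well,
and minimality of `B` forces `B ≤ ∑ A_t`.
-/

namespace Finsupp

variable {σ ι : Type*}

theorem linearCombination_le_degree_nsmul_sum [Fintype ι] (A : ι → σ →₀ ℕ) (m : ι →₀ ℕ) :
    linearCombination ℕ A m ≤ m.degree • ∑ t, A t := by
  rw [linearCombination_apply, sum_fintype _ _ (by simp), Finset.smul_sum]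
  exact Finset.sum_le_sum fun t _ => nsmul_le_nsmul_left zero_le (le_degree t m)

theorem degree_linearCombination (A : ι → σ →₀ ℕ) (m : ι →₀ ℕ) :
    (linearCombination ℕ A m).degree = m.sum fun t d => d * (A t).degree := by
  simp [linearCombination_apply, map_finsuppSum]

theorem exists_degree_le_of_linearCombination_le {A : ι → σ →₀ ℕ} {m : ι →₀ ℕ} {B : σ →₀ ℕ}
    (hm : m ≠ 0) (h : linearCombination ℕ A m ≤ m.degree • B) :
    ∃ t, (A t).degree ≤ B.degree := by
  have hdeg := degree_mono h
  rw [degree_linearCombination, map_nsmul, degree_apply m, Finset.sum_smul] at hdeg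
  obtain ⟨t, ht, hle⟩ := Finset.exists_le_of_sum_le (support_nonempty_iff.2 hm) hdeg
  exact ⟨t, le_of_mul_le_mul_left hle (Nat.pos_of_ne_zero (mem_support_iff.1 ht))⟩

theorem exists_convex_weights_of_linearCombination_le [Fintype ι] {A : ι → σ →₀ ℕ}
    {m : ι →₀ ℕ} {B : σ →₀ ℕ} (hm : m ≠ 0) (h : linearCombination ℕ A m ≤ m.degree • B) :
    ∃ lam : ι → ℚ, (∀ i, 0 ≤ lam i ∧ lam i ≤ 1) ∧ (∑ i, lam i = 1) ∧
      ∀ j, ∑ i, lam i * (A i j : ℚ) ≤ B j := by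
  have hd : (0 : ℚ) < m.degree := by
    exact_mod_cast Nat.pos_of_ne_zero ((degree_eq_zero_iff m).not.2 hm)
  refine ⟨fun t => m t / m.degree, fun t => ⟨by positivity, ?_⟩, ?_, fun j => ?_⟩
  · exact (div_le_one hd).2 (by exact_mod_cast le_degree t m)
  · rw [← Finset.sum_div, ← Nat.cast_sum, ← degree_eq_sum, div_self hd.ne']
  · have hj : ∑ t, m t * A t j ≤ B j * m.degree := by
      simpa [linearCombination_apply, sum_fintype, finsetSum_apply, mul_comm (B j)] using h j
    simp_rw [div_mul_eq_mul_div, ← Finset.sum_div, div_le_iff₀ hd]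
    exact_mod_cast hj

end Finsupp

namespace MvPolynomial

variable {σ ι R : Type*} [CommSemiring R]

theorem span_monomial_range_pow (A : ι → σ →₀ ℕ) (i : ℕ) :
    Ideal.span (Set.range fun t => monomial (A t) (1 : R)) ^ i =
      Ideal.span ((fun s => monomial s (1 : R)) ''
        (Finsupp.linearCombination ℕ A '' {m | m.degree = i})) := by
  induction i with
  | zero =>
    simp [Finsupp.degree_eq_zero_iff, Ideal.one_eq_top]
  | succ i ih =>
    rw [pow_succ, ih, Ideal.span_mul_span]
    congr 1
    ext p
    simp only [Set.mem_mul, Set.mem_image, Set.mem_range, Set.mem_ofPred_eq]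
    constructor
    · rintro ⟨_, ⟨_, ⟨m, hm, rfl⟩, rfl⟩, _, ⟨t, rfl⟩, rfl⟩
      refine ⟨_, ⟨m + Finsupp.single t 1, by simp [hm], rfl⟩, ?_⟩
      simp [monomial_mul]
    · rintro ⟨_, ⟨m, hm, rfl⟩, rfl⟩
      obtain ⟨t, ht⟩ : ∃ t, m t ≠ 0 := by
        by_contra! h
        simp [show m = 0 from Finsupp.ext h] at hm
      have hle : Finsupp.single t 1 ≤ m := by
        simpa [Finsupp.single_le_iff, Nat.one_le_iff_ne_zero] using ht
      refine ⟨_, ⟨_, ⟨m - Finsupp.single t 1, ?_, rfl⟩, rfl⟩, _, ⟨t, rfl⟩, ?_⟩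
      · have := congrArg Finsupp.degree (tsub_add_cancel_of_le hle)
        simp only [map_add, Finsupp.degree_single, hm] at this
        omega
      · rw [monomial_mul, one_mul, ← one_smul ℕ (A t), ← Finsupp.linearCombination_single,
          ← map_add, tsub_add_cancel_of_le hle]

theorem mem_span_monomial_range_pow_iff {A : ι → σ →₀ ℕ} {i : ℕ} {p : MvPolynomial σ R} :
    p ∈ Ideal.span (Set.range fun t => monomial (A t) (1 : R)) ^ i ↔
      ∀ D ∈ p.support, ∃ m : ι →₀ ℕ, m.degree = i ∧ Finsupp.linearCombination ℕ A m ≤ D := by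
  simp [span_monomial_range_pow, mem_ideal_span_monomial_image]

theorem monomial_mem_span_monomial_range_pow_iff [Nontrivial R] {A : ι → σ →₀ ℕ} {i : ℕ}
    {D : σ →₀ ℕ} :
    monomial D (1 : R) ∈ Ideal.span (Set.range fun t => monomial (A t) (1 : R)) ^ i ↔
      ∃ m : ι →₀ ℕ, m.degree = i ∧ Finsupp.linearCombination ℕ A m ≤ D := by
  classical
  simp [mem_span_monomial_range_pow_iff, support_monomial]

end MvPolynomial

theorem mem_intCl_of_pow_mem_pow {I : Ideal (MvPolynomial (Fin n) k)} {f : MvPolynomial (Fin n) k}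
    {r : ℕ} (hr : 0 < r) (hf : f ^ r ∈ I ^ r) : f ∈ intCl I := by
  refine ⟨r, hr, Pi.single r (-f ^ r), fun t _ _ => ?_, ?_⟩
  · rcases eq_or_ne t r with rfl | h
    · simpa using neg_mem hf
    · simp [h]
  · rw [Finset.sum_eq_single_of_mem r (Finset.mem_Icc.2 ⟨hr, le_rfl⟩)
      fun t _ ht => by rw [Pi.single_eq_of_ne ht, zero_mul]]
    simp

theorem exists_pow_support_of_monomial_mem_intCl {I : Ideal (MvPolynomial (Fin n) k)}
    {B : Fin n →₀ ℕ} (hB : monomial B (1 : k) ∈ intCl I) :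
    ∃ i, 0 < i ∧ ∃ a ∈ I ^ i, i • B ∈ a.support := by
  obtain ⟨r, -, a, ha, heq⟩ := hB
  have hcoeff := congrArg (coeff (r • B)) heq
  simp only [monomial_pow, one_pow, coeff_add, coeff_monomial, coeff_sum, coeff_zero] at hcoeff
  obtain ⟨i, hi, hne⟩ :
      ∃ i ∈ Finset.Icc 1 r, coeff (r • B) (a i * monomial ((r - i) • B) 1) ≠ 0 :=
    Finset.exists_ne_zero_of_sum_ne_zero (by intro h; simp [h] at hcoeff)
  obtain ⟨hi1, hir⟩ := Finset.mem_Icc.1 hi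
  have hsplit : r • B = i • B + (r - i) • B := by rw [← add_smul, Nat.add_sub_cancel' hir]
  rw [hsplit, coeff_mul_monomial, mul_one] at hne
  exact ⟨i, hi1, a i, ha i hi1 hir, Finsupp.mem_support_iff.2 hne⟩

theorem monomial_mem_intCl_span_iff {ι : Type*} {A : ι → Fin n →₀ ℕ} {B : Fin n →₀ ℕ} :
    monomial B (1 : k) ∈ intCl (Ideal.span (Set.range fun t => monomial (A t) (1 : k))) ↔
      ∃ m : ι →₀ ℕ, m ≠ 0 ∧ Finsupp.linearCombination ℕ A m ≤ m.degree • B := by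
  constructor
  · intro hB
    obtain ⟨i, hi, a, ha, hiB⟩ := exists_pow_support_of_monomial_mem_intCl hB
    obtain ⟨m, rfl, hm⟩ := mem_span_monomial_range_pow_iff.1 ha _ hiB
    exact ⟨m, by rintro rfl; simp at hi, hm⟩
  · rintro ⟨m, hm0, hm⟩
    refine mem_intCl_of_pow_mem_pow
      (Nat.pos_of_ne_zero ((Finsupp.degree_eq_zero_iff m).not.2 hm0)) ?_
    rw [monomial_pow, one_pow]
    exact monomial_mem_span_monomial_range_pow_iff.2 ⟨m, rfl, hm⟩

theorem le_sum_of_mem_minExps_intCl_span {ι : Type*} [Fintype ι] {A : ι → Fin n →₀ ℕ}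
    {B : Fin n →₀ ℕ}
    (hB : B ∈ minExps (intCl (Ideal.span (Set.range fun t => monomial (A t) (1 : k))))) :
    B ≤ ∑ t, A t := by
  obtain ⟨m, hm0, hmB⟩ := monomial_mem_intCl_span_iff.1 hB.1
  have hmin : Finsupp.linearCombination ℕ A m ≤ m.degree • (B ⊓ ∑ t, A t) := fun j => by
    simpa [Nat.mul_min_mul_left] using
      le_min (hmB j) (Finsupp.linearCombination_le_degree_nsmul_sum A m j)
  exact inf_eq_left.1 (hB.2 _ (monomial_mem_intCl_span_iff.2 ⟨m, hm0, hmin⟩) inf_le_left)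

theorem intCl_minExps_convex_bounds_general {c : ℕ} (A : Fin c → (Fin n →₀ ℕ))
    (I : Ideal (MvPolynomial (Fin n) k))
    (hI : I = Ideal.span (Set.range fun i => monomial (A i) (1 : k))) :
    ∀ B ∈ minExps (intCl I),
      (∃ lam : Fin c → ℚ, (∀ i, 0 ≤ lam i ∧ lam i ≤ 1) ∧ (∑ i, lam i = 1) ∧
        ∀ j : Fin n, (∑ i, lam i * ((A i) j : ℚ)) ≤ (B j : ℚ)) ∧
      (∃ i₀ : Fin c, ∑ j, (A i₀) j ≤ ∑ j, B j) ∧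
      (∑ j, B j ≤ ∑ i, ∑ j, (A i) j) := by
  subst hI
  intro B hB
  obtain ⟨m, hm0, hmB⟩ := monomial_mem_intCl_span_iff.1 hB.1
  refine ⟨Finsupp.exists_convex_weights_of_linearCombination_le hm0 hmB, ?_, ?_⟩
  · simpa only [Finsupp.degree_eq_sum] using
      Finsupp.exists_degree_le_of_linearCombination_le hm0 hmB
  · simpa only [map_sum, Finsupp.degree_eq_sum] using
      Finsupp.degree_mono (le_sum_of_mem_minExps_intCl_span hB)

/-- Let `I` be generated by nonconstant pairwise coprime monomials
`x^{A 1}, …, x^{A c}` (a complete intersection). Every minimal monomial generator `x^B` of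
the integral closure dominates a convex combination of the `A i`; consequently
`deg x^B ≥ min_i deg x^{A i}` and `deg x^B ≤ ∑ i deg x^{A i}`. -/
theorem intCl_minExps_convex_bounds {c : ℕ} (A : Fin c → (Fin n →₀ ℕ))
    (hA0 : ∀ i, A i ≠ 0)
    (hcop : Pairwise fun i j => Disjoint (A i).support (A j).support)
    (I : Ideal (MvPolynomial (Fin n) k))
    (hI : I = Ideal.span (Set.range fun i => monomial (A i) (1 : k))) :
    ∀ B ∈ minExps (intCl I),
      (∃ lam : Fin c → ℚ, (∀ i, 0 ≤ lam i ∧ lam i ≤ 1) ∧ (∑ i, lam i = 1) ∧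
        ∀ j : Fin n, (∑ i, lam i * ((A i) j : ℚ)) ≤ (B j : ℚ)) ∧
      (∃ i₀ : Fin c, ∑ j, (A i₀) j ≤ ∑ j, B j) ∧
      (∑ j, B j ≤ ∑ i, ∑ j, (A i) j) :=
  intCl_minExps_convex_bounds_general A I hI
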